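/- arXiv:1206.1187 — 7 statements merged into one kernel-verified Lean document; each statement's English description precedes it below -/
import Mathlib

section
/- For positive integers a, z, m, q, r with m = a*q + r and 0 ≤ r < a and q > 0, the identity (a*z) mod m = (a*(z mod q) - (z div q)*r) mod m holds (where subtraction and mod are taken over the integers). -/
/-- L'Ecuyer's modular multiplication identity:
for positive integers `a, z, m, q, r` with `m = a*q + r`, `0 ≤ r < a`, `q > 0`,
`(a*z) % m = (a*(z % q) - (z / q)*r) % m` over the integers. -/
theorem lecuyer_identity (a z m q r : ℤ)
    (ha : 0 < a) (hz : 0 < z) (hm : 0 < m) (hq : 0 < q)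
    (hmr : m = a * q + r) (hr0 : 0 ≤ r) (hra : r < a) :
    (a * z) % m = (a * (z % q) - (z / q) * r) % m := by
  rw [Int.emod_eq_emod_iff_emod_sub_eq_zero]
  have h := Int.mul_ediv_add_emod z q
  have : a * z - (a * (z % q) - z / q * r) = (z / q) * m := by
    rw [hmr]; nlinarith [Int.mul_ediv_add_emod z q]
  rw [this, Int.mul_emod_left]
end

section
/- Let m = 3^33, a = 2^25, q = m div a, r = m mod a. For any integer z with 0 ≤ z ≤ 4*m, the quantity (z div q) * r is strictly less than m, i.e. (z div q)*r < m. -/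
/-- For `m = 3^33`, `a = 2^25`, `q = m / a`, `r = m % a`, and any integer `z`
with `0 ≤ z ≤ 4*m`, we have `(z / q) * r < m`. -/
theorem lecuyer_bound :
    ∀ z : ℤ, 0 ≤ z → z ≤ 4 * (3 ^ 33 : ℤ) →
      (z / ((3 ^ 33 : ℤ) / 2 ^ 25)) * ((3 ^ 33 : ℤ) % 2 ^ 25) < 3 ^ 33 := by
  intro z hz0 hz
  have hq : ((3 ^ 33 : ℤ) / 2 ^ 25) = 165672915 := by norm_num
  have hr : ((3 ^ 33 : ℤ) % 2 ^ 25) = 5946243 := by norm_num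
  rw [hq, hr]
  have h1 : z / 165672915 ≤ (4 * (3 ^ 33 : ℤ)) / 165672915 :=
    Int.ediv_le_ediv (by norm_num) hz
  have h2 : (4 * (3 ^ 33 : ℤ)) / 165672915 = 134217728 := by norm_num
  nlinarith [h1, h2]
end

section
/- Let k and m be positive integers with 2^(k-1) ≤ m < 2^k, and let μ = (2^(2k)) div m. For any nonnegative integer x < 2^(2k), the quantity q₃ = ((x div 2^(k-1)) * μ) div 2^(k+1) satisfies (x div m) - 2 ≤ q₃ ≤ x div m. -/
/-!
Write `x / m = (x / a) · (a b / m) / b` with `a = 2^(k-1)`, `b = 2^(k+1)`. Each of the three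
floors in `q₃` only lowers the value, which gives `q₃ ≤ x / m`. Conversely, flooring `x / a`
costs less than `a b / (m b) ≤ 1`, flooring `a b / m` costs less than `(x / a) / b < 1`, and the
final floor less than `1`, so `x / m < q₃ + 3`.
-/

namespace Nat

theorem div_mul_div_div_le_div (x a b m : ℕ) : x / a * (a * b / m) / b ≤ x / m := by
  rcases b.eq_zero_or_pos with rfl | hb
  · simp
  calc x / a * (a * b / m) / b ≤ x * b / m / b := by
        gcongr
        calc x / a * (a * b / m) ≤ x / a * a * b / m := by
              rw [mul_assoc]; exact Nat.mul_div_le_mul_div_assoc _ _ _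
          _ ≤ x * b / m := by gcongr; exact Nat.div_mul_le_self x a
    _ = x / m := by rw [Nat.div_div_eq_div_mul, Nat.mul_div_mul_right _ _ hb]

theorem div_lt_div_mul_div_div_add_three {x a b m : ℕ} (ha : 0 < a) (ham : a ≤ m)
    (hx : x < a * b) : x / m < x / a * (a * b / m) / b + 3 := by
  have hm : 0 < m := ha.trans_le ham
  set q := x / a
  set μ := a * b / m
  set q₃ := q * μ / b
  have hqb : q < b := (Nat.div_lt_iff_lt_mul ha).2 (by rwa [mul_comm])
  have hb : 0 < b := (Nat.zero_le q).trans_lt hqb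
  have hxq : x < a * (q + 1) := Nat.lt_mul_div_succ x ha
  have hμ : a * b < m * (μ + 1) := Nat.lt_mul_div_succ (a * b) hm
  have hq₃ : q * μ < b * (q₃ + 1) := Nat.lt_mul_div_succ (q * μ) hb
  rw [Nat.div_lt_iff_lt_mul hm]
  refine Nat.lt_of_mul_lt_mul_right (a := b) ?_
  calc x * b < q * (a * b) + a * b := by nlinarith
    _ ≤ q * (m * (μ + 1)) + m * b := by gcongr
    _ = m * (q * μ) + m * q + m * b := by ring
    _ < m * (b * (q₃ + 1)) + m * b + m * b := by gcongr
    _ = (q₃ + 3) * m * b := by ring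

end Nat

theorem barrett_quotient_estimate_general (k m : ℕ) (hk : 0 < k)
    (h1 : 2 ^ (k - 1) ≤ m) (x : ℕ) (hx : x < 2 ^ (2 * k)) :
    x / m ≤ ((x / 2 ^ (k - 1)) * (2 ^ (2 * k) / m)) / 2 ^ (k + 1) + 2 ∧
      ((x / 2 ^ (k - 1)) * (2 ^ (2 * k) / m)) / 2 ^ (k + 1) ≤ x / m := by
  have hab : 2 ^ (k - 1) * 2 ^ (k + 1) = 2 ^ (2 * k) := by rw [← pow_add]; congr 1; omega
  rw [← hab] at hx ⊢
  have hlower := Nat.div_lt_div_mul_div_div_add_three (by positivity) h1 hx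
  exact ⟨by omega, Nat.div_mul_div_div_le_div x _ _ m⟩

/-- Barrett quotient estimation: for `2^(k-1) ≤ m < 2^k`, `μ = 2^(2k) / m`,
and `x < 2^(2k)`, the estimate `q₃ = ((x / 2^(k-1)) * μ) / 2^(k+1)` satisfies
`x / m - 2 ≤ q₃ ≤ x / m`. -/
theorem barrett_quotient_estimate (k m : ℕ) (hk : 0 < k) (hm : 0 < m)
    (h1 : 2 ^ (k - 1) ≤ m) (h2 : m < 2 ^ k) (x : ℕ) (hx : x < 2 ^ (2 * k)) :
    x / m ≤ ((x / 2 ^ (k - 1)) * (2 ^ (2 * k) / m)) / 2 ^ (k + 1) + 2 ∧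
      ((x / 2 ^ (k - 1)) * (2 ^ (2 * k) / m)) / 2 ^ (k + 1) ≤ x / m :=
  barrett_quotient_estimate_general k m hk h1 x hx
end

section
/- Let k and m be positive integers with 2^(k-1) ≤ m < 2^k, and let μ = (2^(2k)) div m. For any nonnegative integer x, ((x div 2^k) * μ) div 2^k ≤ x div m. -/
/-- Modified Barrett quotient estimation: for `2^(k-1) ≤ m < 2^k` and
`μ = 2^(2k) / m`, one has `((x / 2^k) * μ) / 2^k ≤ x / m` for all `x`. -/
theorem modified_barrett_quotient_estimate (k m : ℕ) (hk : 0 < k) (hm : 0 < m)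
    (h1 : 2 ^ (k - 1) ≤ m) (h2 : m < 2 ^ k) (x : ℕ) :
    ((x / 2 ^ k) * (2 ^ (2 * k) / m)) / 2 ^ k ≤ x / m := by
  set q := x / 2 ^ k with hq
  set μ := 2 ^ (2 * k) / m with hμ
  have hp : (0:ℕ) < 2 ^ k := pow_pos (by norm_num) _
  have key : q * μ * m ≤ x * 2 ^ k := by
    calc q * μ * m = q * (μ * m) := by ring
    _ ≤ q * 2 ^ (2 * k) := Nat.mul_le_mul_left _ (Nat.div_mul_le_self _ _)
    _ = (q * 2 ^ k) * 2 ^ k := by rw [two_mul, pow_add]; ring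
    _ ≤ x * 2 ^ k := Nat.mul_le_mul_right _ (Nat.div_mul_le_self _ _)
  rw [Nat.le_div_iff_mul_le hm]
  calc (q * μ) / 2 ^ k * m ≤ q * μ * m / 2 ^ k := by
        rw [Nat.le_div_iff_mul_le hp]
        rw [mul_right_comm]
        exact Nat.mul_le_mul_right _ (Nat.div_mul_le_self _ _)
    _ ≤ x * 2 ^ k / 2 ^ k := Nat.div_le_div_right key
    _ = x := Nat.mul_div_cancel _ hp
end

section
/- For the constant α = Σ_{k=1}^∞ 1/(3^k 2^(3^k)) and any positive integer n, writing x_n = frac(2^n · α), if 3^m ≤ n < 3^(m+1) then x_n = frac(2^n · Σ_{k=1}^m 1/(3^k 2^(3^k))) + Σ_{k=m+1}^∞ 2^n/(3^k 2^(3^k)), where the tail term Σ_{k=m+1}^∞ 2^(n - 3^k)/3^k is strictly less than 2^(n - 3^(m+1)) · (3/(2·3^(m+1))). -/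
/-!
The head `A = 2ⁿ ∑_{k<m} 1/(3^{k+1} 2^{3^{k+1}})` has denominator dividing `3^m`, since
`3^{k+1} ≤ 3^m ≤ n` clears the powers of two; hence `fract A ≤ 1 - 3^{-m}`. The tail is dominated
termwise by a geometric series of ratio `1/6` starting at `2^{n-3^{m+1}}/3^{m+1}`, which gives the
stated bound and, as `n < 3^{m+1}`, makes the tail smaller than `3^{-m}`. So adding the tail to `A`
does not cross an integer.
-/

theorem Int.fract_add_of_natCast_mul_eq_intCast {K : Type*} [Field K] [LinearOrder K]
    [IsStrictOrderedRing K] [FloorRing K] {a t : K} {q : ℕ} {z : ℤ} (hz : q * a = z)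
    (ht₀ : 0 ≤ t) (ht : t < 1 / q) : Int.fract (a + t) = Int.fract a + t := by
  have hq : (0 : K) < q := one_div_pos.mp (ht₀.trans_lt ht)
  -- `q * fract a` is an integer in `[0, q)`, hence at most `q - 1`
  have hw : (q : K) * Int.fract a = ((z - q * ⌊a⌋ : ℤ) : K) := by
    rw [Int.fract]; push_cast; rw [← hz]; ring
  have hw_lt : z - q * ⌊a⌋ < q := by
    exact_mod_cast hw ▸ mul_lt_of_lt_one_right hq (Int.fract_lt_one a)
  have hw_le : (q : K) * Int.fract a + 1 ≤ q := by
    rw [hw]; exact_mod_cast Int.add_one_le_of_lt hw_lt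
  have hlt : Int.fract a + t < 1 :=
    calc Int.fract a + t < Int.fract a + 1 / q := by gcongr
      _ = ((q : K) * Int.fract a + 1) / q := by field_simp
      _ ≤ 1 := (div_le_one hq).mpr hw_le
  refine Int.fract_eq_iff.mpr ⟨add_nonneg (Int.fract_nonneg a) ht₀, hlt, ⌊a⌋, ?_⟩
  rw [Int.fract]; ring

theorem two_pow_mul_one_div_three_pow_mul_two_pow (n j : ℕ) :
    (2 : ℝ) ^ n * (1 / (3 ^ j * 2 ^ 3 ^ j)) = 2 ^ ((n : ℤ) - 3 ^ j) / 3 ^ j := by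
  rw [zpow_sub₀ two_ne_zero, zpow_natCast, show (3 : ℤ) ^ j = ((3 ^ j : ℕ) : ℤ) by push_cast; rfl,
    zpow_natCast]
  field_simp

theorem two_zpow_sub_three_pow_add_le (e : ℤ) (j k : ℕ) :
    (2 : ℝ) ^ (e - 3 ^ (j + k)) / 3 ^ (j + k) ≤ 2 ^ (e - 3 ^ j) / 3 ^ j * (1 / 6) ^ k := by
  -- `3 ^ (j + k) ≥ 3 ^ j * (k + 1) ≥ 3 ^ j + k`
  have hexp : (3 : ℤ) ^ j + k ≤ 3 ^ (j + k) := by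
    have h1 : (k : ℤ) + 1 ≤ 3 ^ k := by exact_mod_cast Nat.lt_pow_self (by norm_num)
    have h2 : (1 : ℤ) ≤ 3 ^ j := one_le_pow₀ (by norm_num)
    rw [pow_add]; nlinarith
  have hnum : (2 : ℝ) ^ (e - 3 ^ (j + k)) ≤ 2 ^ (e - 3 ^ j) * (1 / 2) ^ k :=
    calc (2 : ℝ) ^ (e - 3 ^ (j + k)) ≤ 2 ^ (e - 3 ^ j - k) :=
          zpow_le_zpow_right₀ one_le_two (by linarith)
      _ = 2 ^ (e - 3 ^ j) * (1 / 2) ^ k := by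
          rw [zpow_sub₀ two_ne_zero, zpow_natCast, div_pow, one_pow, div_eq_mul_one_div]
  calc (2 : ℝ) ^ (e - 3 ^ (j + k)) / 3 ^ (j + k)
      ≤ 2 ^ (e - 3 ^ j) * (1 / 2) ^ k / (3 ^ j * 3 ^ k) := by rw [pow_add (3 : ℝ)]; gcongr
    _ = 2 ^ (e - 3 ^ j) / 3 ^ j * (1 / 6) ^ k := by
        simp only [div_pow, one_pow]; field_simp; norm_num [← mul_pow]

theorem summable_two_zpow_sub_three_pow_div (e : ℤ) (j : ℕ) :
    Summable fun k : ℕ => (2 : ℝ) ^ (e - 3 ^ (j + k)) / 3 ^ (j + k) :=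
  Summable.of_nonneg_of_le (fun _ => by positivity) (two_zpow_sub_three_pow_add_le e j)
    ((summable_geometric_of_lt_one (by norm_num) (by norm_num)).mul_left _)

theorem tsum_two_zpow_sub_three_pow_div_lt (e : ℤ) (j : ℕ) :
    ∑' k : ℕ, (2 : ℝ) ^ (e - 3 ^ (j + k)) / 3 ^ (j + k) < 2 ^ (e - 3 ^ j) * (3 / (2 * 3 ^ j)) := by
  have hF : (0 : ℝ) < 2 ^ (e - 3 ^ j) / 3 ^ j := by positivity
  calc ∑' k : ℕ, (2 : ℝ) ^ (e - 3 ^ (j + k)) / 3 ^ (j + k)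
      ≤ ∑' k : ℕ, 2 ^ (e - 3 ^ j) / 3 ^ j * (1 / 6 : ℝ) ^ k :=
        (summable_two_zpow_sub_three_pow_div e j).tsum_le_tsum (two_zpow_sub_three_pow_add_le e j)
          ((summable_geometric_of_lt_one (by norm_num) (by norm_num)).mul_left _)
    _ = 2 ^ (e - 3 ^ j) / 3 ^ j * (6 / 5) := by
        rw [tsum_mul_left, tsum_geometric_of_lt_one (by norm_num) (by norm_num)]; norm_num
    _ < 2 ^ (e - 3 ^ j) / 3 ^ j * (3 / 2) := mul_lt_mul_of_pos_left (by norm_num) hF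
    _ = 2 ^ (e - 3 ^ j) * (3 / (2 * 3 ^ j)) := by field_simp

theorem two_zpow_mul_lt_one_div_three_pow {e : ℤ} (he : e < 0) (m : ℕ) :
    (2 : ℝ) ^ e * (3 / (2 * 3 ^ (m + 1))) < 1 / 3 ^ m :=
  calc (2 : ℝ) ^ e * (3 / (2 * 3 ^ (m + 1))) ≤ 2 ^ (-1 : ℤ) * (3 / (2 * 3 ^ (m + 1))) := by
        gcongr
        · norm_num
        · omega
    _ = 1 / (4 * 3 ^ m) := by rw [pow_succ]; field_simp; norm_num
    _ < 1 / 3 ^ m := by gcongr; linarith [pow_pos (three_pos (α := ℝ)) m]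

theorem exists_three_pow_mul_two_pow_mul_sum_eq_intCast {m n : ℕ} (hn : 3 ^ m ≤ n) :
    ∃ z : ℤ,
      (3 : ℝ) ^ m * (2 ^ n * ∑ k ∈ Finset.range m, 1 / (3 ^ (k + 1) * 2 ^ 3 ^ (k + 1))) = z := by
  refine ⟨∑ k ∈ Finset.range m, 3 ^ (m - (k + 1)) * 2 ^ (n - 3 ^ (k + 1)), ?_⟩
  push_cast
  rw [Finset.mul_sum, Finset.mul_sum]
  refine Finset.sum_congr rfl fun k hk => ?_
  have hkm : k + 1 ≤ m := Finset.mem_range.mp hk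
  have hkn : 3 ^ (k + 1) ≤ n := (Nat.pow_le_pow_right (by norm_num) hkm).trans hn
  rw [← Nat.sub_add_cancel hkm, ← Nat.sub_add_cancel hkn]
  simp only [pow_add, Nat.add_sub_cancel]
  field_simp

theorem two_pow_mul_tsum_eq_sum_add_tsum (m n : ℕ) :
    (2 : ℝ) ^ n * ∑' k : ℕ, 1 / (3 ^ (k + 1) * 2 ^ 3 ^ (k + 1)) =
      2 ^ n * ∑ k ∈ Finset.range m, 1 / (3 ^ (k + 1) * 2 ^ 3 ^ (k + 1)) +
        ∑' k : ℕ, (2 : ℝ) ^ ((n : ℤ) - 3 ^ (m + 1 + k)) / 3 ^ (m + 1 + k) := by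
  set h : ℕ → ℝ := fun k => 2 ^ n * (1 / (3 ^ (k + 1) * 2 ^ 3 ^ (k + 1)))
  have hh : ∀ k, h k = 2 ^ ((n : ℤ) - 3 ^ (1 + k)) / 3 ^ (1 + k) := fun k => by
    rw [add_comm 1 k]; exact two_pow_mul_one_div_three_pow_mul_two_pow n (k + 1)
  have hsum : Summable h :=
    (summable_two_zpow_sub_three_pow_div n 1).congr fun k => (hh k).symm
  rw [← tsum_mul_left, Finset.mul_sum, ← hsum.sum_add_tsum_nat_add m]
  congr 1
  refine tsum_congr fun k => ?_
  rw [hh, show 1 + (k + m) = m + 1 + k by ring]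

/-- Decomposition of the shifted binary expansion of `α = Σ_{k≥1} 1/(3^k 2^(3^k))`:
if `3^m ≤ n < 3^(m+1)` then `frac(2^n α)` equals `frac` of the shifted partial sum
plus the tail `Σ_{k=m+1}^∞ 2^(n-3^k)/3^k`, and the tail is strictly less than
`2^(n - 3^(m+1)) · (3 / (2 · 3^(m+1)))`. -/
theorem shifted_expansion_decomposition (m n : ℕ) (hn : 3 ^ m ≤ n) (hn' : n < 3 ^ (m + 1)) :
    Int.fract ((2 : ℝ) ^ n * ∑' k : ℕ, (1 : ℝ) / (3 ^ (k + 1) * 2 ^ (3 ^ (k + 1)))) =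
        Int.fract ((2 : ℝ) ^ n * ∑ k ∈ Finset.range m, (1 : ℝ) / (3 ^ (k + 1) * 2 ^ (3 ^ (k + 1)))) +
          ∑' k : ℕ, (2 : ℝ) ^ ((n : ℤ) - 3 ^ (m + 1 + k)) / 3 ^ (m + 1 + k) ∧
      (∑' k : ℕ, (2 : ℝ) ^ ((n : ℤ) - 3 ^ (m + 1 + k)) / 3 ^ (m + 1 + k)) <
        (2 : ℝ) ^ ((n : ℤ) - 3 ^ (m + 1)) * (3 / (2 * 3 ^ (m + 1))) := by
  have htail := tsum_two_zpow_sub_three_pow_div_lt n (m + 1)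
  refine ⟨?_, htail⟩
  obtain ⟨z, hz⟩ := exists_three_pow_mul_two_pow_mul_sum_eq_intCast hn
  have hexp : (n : ℤ) - 3 ^ (m + 1) < 0 := sub_neg.mpr (by exact_mod_cast hn')
  rw [two_pow_mul_tsum_eq_sum_add_tsum m n]
  refine Int.fract_add_of_natCast_mul_eq_intCast (q := 3 ^ m) (by exact_mod_cast hz)
    (tsum_nonneg fun _ => by positivity) ?_
  exact_mod_cast htail.trans (two_zpow_mul_lt_one_div_three_pow hexp m)
end

section
/- For integers m ≥ 1 and n with 3^m ≤ n < 3^(m+1), the tail Σ_{k=m+1}^∞ 2^(n-3^k)/3^k is bounded above by 2^(n - 3^(m+1) + 1)/3^(m+1). -/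
/-! The terms decay faster than geometrically with ratio `1/2`: passing from `3^j` to `3^(j+1)`
lowers the power of `2` by `2 * 3^j ≥ 1` and raises the denominator, so the tail is at most
its first term times `∑ 2⁻ᵏ = 2`. -/

theorem tsum_le_div_one_sub_of_succ_le_mul {u : ℕ → ℝ} {r : ℝ} (hu : ∀ k, 0 ≤ u k)
    (hr₀ : 0 ≤ r) (hr₁ : r < 1) (h : ∀ k, u (k + 1) ≤ r * u k) :
    ∑' k, u k ≤ u 0 / (1 - r) := by
  have hgeom : ∀ k, u k ≤ u 0 * r ^ k := fun k =>
    (le_geom hr₀ k fun i _ => h i).trans_eq (mul_comm _ _)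
  have hsummable : Summable fun k => u 0 * r ^ k :=
    (summable_geometric_of_lt_one hr₀ hr₁).mul_left _
  calc ∑' k, u k ≤ ∑' k, u 0 * r ^ k :=
        (hsummable.of_nonneg_of_le hu hgeom).tsum_le_tsum hgeom hsummable
    _ = u 0 / (1 - r) := by
        rw [tsum_mul_left, tsum_geometric_of_lt_one hr₀ hr₁, div_eq_mul_inv]

theorem two_zpow_sub_three_pow_succ_div_le (n : ℤ) (j : ℕ) :
    (2 : ℝ) ^ (n - 3 ^ (j + 1)) / 3 ^ (j + 1) ≤ 1 / 2 * ((2 : ℝ) ^ (n - 3 ^ j) / 3 ^ j) := by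
  have hexp : n - 3 ^ (j + 1) ≤ n - 3 ^ j - 1 := by
    have : (1 : ℤ) ≤ 3 ^ j := one_le_pow₀ (by norm_num)
    rw [pow_succ]
    linarith
  calc (2 : ℝ) ^ (n - 3 ^ (j + 1)) / 3 ^ (j + 1)
      ≤ (2 : ℝ) ^ (n - 3 ^ j - 1) / 3 ^ j :=
        div_le_div₀ (by positivity) (zpow_le_zpow_right₀ (by norm_num) hexp) (by positivity)
          (pow_le_pow_right₀ (by norm_num) j.le_succ)
    _ = 1 / 2 * ((2 : ℝ) ^ (n - 3 ^ j) / 3 ^ j) := by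
        rw [zpow_sub₀ (by norm_num : (2 : ℝ) ≠ 0), zpow_one]
        ring

theorem tail_estimate_general (m n : ℕ) :
    (∑' k : ℕ, (2 : ℝ) ^ ((n : ℤ) - 3 ^ (m + 1 + k)) / 3 ^ (m + 1 + k)) ≤
      (2 : ℝ) ^ ((n : ℤ) - 3 ^ (m + 1) + 1) / 3 ^ (m + 1) := by
  calc (∑' k : ℕ, (2 : ℝ) ^ ((n : ℤ) - 3 ^ (m + 1 + k)) / 3 ^ (m + 1 + k))
      ≤ (2 : ℝ) ^ ((n : ℤ) - 3 ^ (m + 1)) / 3 ^ (m + 1) / (1 - 1 / 2) :=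
        tsum_le_div_one_sub_of_succ_le_mul (fun _ => by positivity) (by norm_num) (by norm_num)
          fun k => two_zpow_sub_three_pow_succ_div_le n (m + 1 + k)
    _ = (2 : ℝ) ^ ((n : ℤ) - 3 ^ (m + 1) + 1) / 3 ^ (m + 1) := by
        rw [zpow_add_one₀ (by norm_num : (2 : ℝ) ≠ 0)]
        ring

/-- Tail estimate: for `m ≥ 1` and `3^m ≤ n < 3^(m+1)`, the tail
`Σ_{k=m+1}^∞ 2^(n-3^k)/3^k` is at most `2^(n - 3^(m+1) + 1)/3^(m+1)`. -/
theorem tail_estimate (m n : ℕ) (hm : 1 ≤ m) (hn : 3 ^ m ≤ n) (hn' : n < 3 ^ (m + 1)) :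
    (∑' k : ℕ, (2 : ℝ) ^ ((n : ℤ) - 3 ^ (m + 1 + k)) / 3 ^ (m + 1 + k)) ≤
      (2 : ℝ) ^ ((n : ℤ) - 3 ^ (m + 1) + 1) / 3 ^ (m + 1) :=
  tail_estimate_general m n
end

section
/- Let m = 3^33, k = 53, μ = 2^(2k) div m. Then for every z with 0 ≤ z < m, the value q₃ = (z·μ) div 2^k satisfies (2^k · z) div m − 1 ≤ q₃ ≤ (2^k · z) div m. -/
/-- Sharpened modified-Barrett quotient estimate for `m = 3^33`, `k = 53`,
`μ = 2^106 / m`: for `z < m`, `(2^53·z)/m − 1 ≤ (z·μ)/2^53 ≤ (2^53·z)/m`. -/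
theorem sharp_barrett_estimate (z : ℕ) (hz : z < 3 ^ 33) :
    (2 ^ 53 * z) / 3 ^ 33 ≤ (z * (2 ^ 106 / 3 ^ 33)) / 2 ^ 53 + 1 ∧
      (z * (2 ^ 106 / 3 ^ 33)) / 2 ^ 53 ≤ (2 ^ 53 * z) / 3 ^ 33 := by
  have hm : (0:ℕ) < 3 ^ 33 := by positivity
  set μ := 2 ^ 106 / 3 ^ 33 with hμ
  set q := (2 ^ 53 * z) / 3 ^ 33 with hq
  set p := (z * μ) / 2 ^ 53 with hp
  have hqm : q * 3 ^ 33 ≤ 2 ^ 53 * z := Nat.div_mul_le_self _ _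
  have hmod := Nat.div_add_mod (2 ^ 106) (3 ^ 33)
  have hr : 2 ^ 106 % 3 ^ 33 < 3 ^ 33 := Nat.mod_lt _ hm
  have hpm : p * 2 ^ 53 ≤ z * μ := Nat.div_mul_le_self _ _
  have hqmod := Nat.div_add_mod (2 ^ 53 * z) (3 ^ 33)
  have hqr : (2 ^ 53 * z) % 3 ^ 33 < 3 ^ 33 := Nat.mod_lt _ hm
  have hqub : 2 ^ 53 * z < (q + 1) * 3 ^ 33 := by
    rw [add_mul, one_mul, mul_comm]
    omega
  have hpmod := Nat.div_add_mod (z * μ) (2 ^ 53)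
  have hpr : (z * μ) % 2 ^ 53 < 2 ^ 53 := Nat.mod_lt _ (by positivity)
  have hpub : z * μ < (p + 1) * 2 ^ 53 := by
    rw [add_mul, one_mul, mul_comm]
    omega
  have hm53 : (3:ℕ) ^ 33 < 2 ^ 53 := by norm_num
  have h2 : 2 ^ 106 * z = 3 ^ 33 * (z * μ) + z * (2 ^ 106 % 3 ^ 33) := by
    rw [← hmod]; ring
  constructor
  · by_contra h
    push_neg at h
    have h1 : 3 ^ 33 * (q * 2 ^ 53) ≤ 2 ^ 106 * z := by nlinarith
    have hzr : z * (2 ^ 106 % 3 ^ 33) < 3 ^ 33 * 2 ^ 53 := by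
      calc z * (2 ^ 106 % 3 ^ 33) ≤ 3 ^ 33 * 3 ^ 33 :=
            Nat.mul_le_mul hz.le hr.le
        _ < 3 ^ 33 * 2 ^ 53 := by norm_num
    have c1 : 2 ^ 106 * z < 3 ^ 33 * ((p + 2) * 2 ^ 53) := by
      have hμub : 3 ^ 33 * (z * μ) < 3 ^ 33 * ((p + 1) * 2 ^ 53) :=
        (Nat.mul_lt_mul_left hm).mpr hpub
      calc 2 ^ 106 * z = 3 ^ 33 * (z * μ) + z * (2 ^ 106 % 3 ^ 33) := h2
        _ < 3 ^ 33 * ((p + 1) * 2 ^ 53) + 3 ^ 33 * 2 ^ 53 := by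
            exact Nat.add_lt_add hμub hzr
        _ = 3 ^ 33 * ((p + 2) * 2 ^ 53) := by ring
    have c2 : 3 ^ 33 * ((p + 2) * 2 ^ 53) ≤ 3 ^ 33 * (q * 2 ^ 53) := by
      apply Nat.mul_le_mul_left
      apply Nat.mul_le_mul_right
      omega
    omega
  · by_contra h
    push_neg at h
    have h3 : 3 ^ 33 * (z * μ) ≤ 2 ^ 106 * z := by omega
    have d1 : 3 ^ 33 * (p * 2 ^ 53) ≤ 2 ^ 106 * z :=
      le_trans (Nat.mul_le_mul_left _ hpm) h3
    have d3 : 2 ^ 106 * z < 2 ^ 53 * ((q + 1) * 3 ^ 33) := by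
      calc 2 ^ 106 * z = 2 ^ 53 * (2 ^ 53 * z) := by ring
        _ < 2 ^ 53 * ((q + 1) * 3 ^ 33) := (Nat.mul_lt_mul_left (by positivity)).mpr hqub
    have d4 : 3 ^ 33 * (p * 2 ^ 53) < 3 ^ 33 * ((q + 1) * 2 ^ 53) := by
      calc 3 ^ 33 * (p * 2 ^ 53) ≤ 2 ^ 106 * z := d1
        _ < 2 ^ 53 * ((q + 1) * 3 ^ 33) := d3
        _ = 3 ^ 33 * ((q + 1) * 2 ^ 53) := by ring
    have d5 : p * 2 ^ 53 < (q + 1) * 2 ^ 53 := Nat.lt_of_mul_lt_mul_left d4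
    have d6 : p < q + 1 := Nat.lt_of_mul_lt_mul_right d5
    omega
end
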